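/- For every sequence i : ℕ → {0,1}, the diameters of the nested barycentric triangles for the triple (e,e,(23)) tend to zero: diam(Γ_{(e,e,23)}(i₁,…,iₙ)) → 0 as n → ∞. In particular the intersection over all n of these triangles is a single point. -/

import Mathlib

open Matrix MeasureTheory Filter

noncomputable section

/-- A point of ℝ² with the Euclidean metric. -/
def euclPt (x y : ℝ) : EuclideanSpace ℝ (Fin 2) :=
  (WithLp.equiv 2 (Fin 2 → ℝ)).symm ![x, y]

/-- Projection π(a,b,c) = (b/a, c/a), landing in Euclidean ℝ². -/
def projE (v : Fin 3 → ℝ) : EuclideanSpace ℝ (Fin 2) := euclPt (v 1 / v 0) (v 2 / v 0)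

def Vmat : Matrix (Fin 3) (Fin 3) ℝ := !![1,1,1; 0,1,1; 0,0,1]

def prodSeq (C : Fin 2 → Matrix (Fin 3) (Fin 3) ℝ) (i : ℕ → Fin 2) :
    ℕ → Matrix (Fin 3) (Fin 3) ℝ
  | 0 => 1
  | n + 1 => prodSeq C i n * C (i (n + 1))

/-- The subtriangle: convex hull of the π-images of the columns of V·C_{i₁}⋯C_{iₙ}. -/
def subTriE (C : Fin 2 → Matrix (Fin 3) (Fin 3) ℝ) (i : ℕ → Fin 2) (n : ℕ) :
    Set (EuclideanSpace ℝ (Fin 2)) :=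
  convexHull ℝ (Set.range fun j : Fin 3 => projE fun k => (Vmat * prodSeq C i n) k j)

/-- G₀(e,e,23) and G₁(e,e,23). -/
def Gee23 : Fin 2 → Matrix (Fin 3) (Fin 3) ℝ :=
  ![!![0,0,1/2; 1,0,0; 0,1,1/2], !![1,1/2,0; 0,0,1; 0,1/2,0]]

/-!
Every column of `G₀` and `G₁` sums to `1`, so the columns of `V·G_{i₁}⋯G_{iₙ}` keep the form
`(1, x, y)` and `π` just reads off `(x, y)`: the projective subdivision is affine. Each step
replaces a triangle `p₀p₁p₂` by `p₁ p₂ m` or `p₀ m p₁`, where `m` is the midpoint of `p₀p₂`, so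
the edge vectors `u = p₀ - p₁`, `v = p₁ - p₂` evolve by two fixed linear maps. The first is not a
contraction of `‖u‖² + ‖v‖²`, but every product of two of them shrinks it by the factor `3/4`
(only `|2⟪u, v⟫| ≤ ‖u‖² + ‖v‖²` is needed). Since the diameter is at most `‖u‖ + ‖v‖`, the
diameters tend to zero, and the nested compact triangles meet in a single point.
-/

open Set Metric Topology
open scoped RealInnerProductSpace

lemma tendsto_zero_of_le_mul_add_two {f : ℕ → ℝ} {r : ℝ} (hf : ∀ n, 0 ≤ f n) (hr₀ : 0 ≤ r)
    (hr₁ : r < 1) (h : ∀ n, f (n + 2) ≤ r * f n) : Tendsto f atTop (𝓝 0) := by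
  set g : ℕ → ℝ := fun m => f (2 * m) + f (2 * m + 1)
  have hg : ∀ m, g m ≤ r ^ m * g 0 := fun m => le_geom hr₀ m fun k _ => by
    simp only [g, mul_add]
    linarith [h (2 * k), h (2 * k + 1)]
  have hfg : ∀ n, f n ≤ r ^ (n / 2) * g 0 := fun n => by
    refine le_trans ?_ (hg (n / 2))
    rcases Nat.even_or_odd' n with ⟨m, rfl | rfl⟩
    · simp only [g, Nat.mul_div_cancel_left m two_pos]
      linarith [hf (2 * m + 1)]
    · simp only [g, show (2 * m + 1) / 2 = m by omega]
      linarith [hf (2 * m)]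
  have hlim : Tendsto (fun n => r ^ (n / 2) * g 0) atTop (𝓝 0) := by
    simpa using ((tendsto_pow_atTop_nhds_zero_of_lt_one hr₀ hr₁).comp
      (Nat.tendsto_div_const_atTop two_ne_zero)).mul_const (g 0)
  exact squeeze_zero hf hfg hlim

lemma exists_iInter_eq_singleton_of_tendsto_diam {X : Type*} [MetricSpace X] {s : ℕ → Set X}
    (hs : Antitone s) (hcpt : ∀ n, IsCompact (s n)) (hne : ∀ n, (s n).Nonempty)
    (hdiam : Tendsto (fun n => diam (s n)) atTop (𝓝 0)) : ∃ x, ⋂ n, s n = {x} := by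
  rw [exists_eq_singleton_iff_nonempty_subsingleton]
  refine ⟨IsCompact.nonempty_iInter_of_sequence_nonempty_isCompact_isClosed s
    (fun n => hs n.le_succ) hne (hcpt 0) fun n => (hcpt n).isClosed, fun x hx y hy => ?_⟩
  rw [mem_iInter] at hx hy
  have hle : ∀ n, dist x y ≤ diam (s n) := fun n =>
    dist_le_diam_of_mem (hcpt n).isBounded (hx n) (hy n)
  exact dist_le_zero.mp (ge_of_tendsto' hdiam hle)

section Triangles

variable {E : Type*} [NormedAddCommGroup E]

def edges (p : Fin 3 → E) : E × E := (p 0 - p 1, p 1 - p 2)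

def edgeEnergy (x : E × E) : ℝ := ‖x.1‖ ^ 2 + ‖x.2‖ ^ 2

lemma edgeEnergy_nonneg (x : E × E) : 0 ≤ edgeEnergy x := by
  unfold edgeEnergy; positivity

lemma dist_le_norm_add_norm_edges (p : Fin 3 → E) (j k : Fin 3) :
    dist (p j) (p k) ≤ ‖(edges p).1‖ + ‖(edges p).2‖ := by
  rw [edges, ← dist_eq_norm, ← dist_eq_norm]
  have h02 := dist_triangle (p 0) (p 1) (p 2)
  have h01 := dist_nonneg (x := p 0) (y := p 1)
  have h12 := dist_nonneg (x := p 1) (y := p 2)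
  fin_cases j <;> fin_cases k <;> simp <;>
    linarith [dist_comm (p 0) (p 1), dist_comm (p 1) (p 2), dist_comm (p 0) (p 2)]

variable [NormedSpace ℝ E]

def subdivide : Fin 2 → (Fin 3 → E) → Fin 3 → E
  | 0, p => ![p 1, p 2, midpoint ℝ (p 0) (p 2)]
  | 1, p => ![p 0, midpoint ℝ (p 0) (p 2), p 1]

def triangleSeq (p : Fin 3 → E) (i : ℕ → Fin 2) : ℕ → Fin 3 → E
  | 0 => p
  | n + 1 => subdivide (i (n + 1)) (triangleSeq p i n)

def edgeMap : Fin 2 → E × E → E × E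
  | 0, x => (x.2, -(2⁻¹ : ℝ) • (x.1 + x.2))
  | 1, x => ((2⁻¹ : ℝ) • (x.1 + x.2), (2⁻¹ : ℝ) • (x.1 - x.2))

lemma edges_subdivide (a : Fin 2) (p : Fin 3 → E) :
    edges (subdivide a p) = edgeMap a (edges p) := by
  fin_cases a <;> ext <;> simp [subdivide, edges, edgeMap, midpoint_eq_smul_add] <;> module

lemma convexHull_subdivide_subset (a : Fin 2) (p : Fin 3 → E) :
    convexHull ℝ (range (subdivide a p)) ⊆ convexHull ℝ (range p) := by
  have hconv := convex_convexHull ℝ (range p)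
  have hvert : ∀ j, p j ∈ convexHull ℝ (range p) := fun j => subset_convexHull ℝ _ ⟨j, rfl⟩
  have hmid : midpoint ℝ (p 0) (p 2) ∈ convexHull ℝ (range p) :=
    hconv.segment_subset (hvert 0) (hvert 2) (midpoint_mem_segment _ _)
  refine convexHull_min (range_subset_iff.2 fun j => ?_) hconv
  fin_cases a <;> fin_cases j <;> simp [subdivide, hvert, hmid]

lemma antitone_convexHull_triangleSeq (p : Fin 3 → E) (i : ℕ → Fin 2) :
    Antitone fun n => convexHull ℝ (range (triangleSeq p i n)) :=
  antitone_nat_of_succ_le fun _ => convexHull_subdivide_subset _ _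

lemma diam_convexHull_le_sqrt_edgeEnergy (p : Fin 3 → E) :
    diam (convexHull ℝ (range p)) ≤ 2 * √(edgeEnergy (edges p)) := by
  have hle : ∀ x : E, x = (edges p).1 ∨ x = (edges p).2 → ‖x‖ ≤ √(edgeEnergy (edges p)) := by
    rintro x (rfl | rfl) <;> refine Real.le_sqrt_of_sq_le ?_ <;> simp only [edgeEnergy] <;>
      nlinarith [sq_nonneg ‖(edges p).1‖, sq_nonneg ‖(edges p).2‖]
  rw [convexHull_diam]
  refine diam_le_of_forall_dist_le (by positivity) ?_
  rintro _ ⟨j, rfl⟩ _ ⟨k, rfl⟩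
  linarith [dist_le_norm_add_norm_edges p j k, hle _ (.inl rfl), hle _ (.inr rfl)]

end Triangles

section Contraction

variable {E : Type*} [NormedAddCommGroup E] [InnerProductSpace ℝ E]

lemma edgeEnergy_edgeMap_edgeMap_le (a b : Fin 2) (x : E × E) :
    edgeEnergy (edgeMap a (edgeMap b x)) ≤ 3 / 4 * edgeEnergy x := by
  obtain ⟨u, v⟩ := x
  have hadd : 0 ≤ ‖u + v‖ ^ 2 := by positivity
  have hsub : 0 ≤ ‖u - v‖ ^ 2 := by positivity
  rw [norm_add_sq_real] at hadd
  rw [norm_sub_sq_real] at hsub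
  fin_cases a <;> fin_cases b <;>
    simp only [edgeEnergy, edgeMap, ← real_inner_self_eq_norm_sq, inner_add_left, inner_add_right,
      inner_sub_left, inner_sub_right, real_inner_smul_left, real_inner_smul_right,
      real_inner_comm u v] at * <;>
    linarith [real_inner_self_nonneg (x := u), real_inner_self_nonneg (x := v)]

lemma tendsto_edgeEnergy_edges_triangleSeq (p : Fin 3 → E) (i : ℕ → Fin 2) :
    Tendsto (fun n => edgeEnergy (edges (triangleSeq p i n))) atTop (𝓝 0) :=
  tendsto_zero_of_le_mul_add_two (r := 3 / 4) (fun _ => edgeEnergy_nonneg _) (by norm_num)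
    (by norm_num) fun _ => by
      simpa only [triangleSeq, edges_subdivide] using edgeEnergy_edgeMap_edgeMap_le _ _ _

lemma tendsto_diam_convexHull_triangleSeq (p : Fin 3 → E) (i : ℕ → Fin 2) :
    Tendsto (fun n => diam (convexHull ℝ (range (triangleSeq p i n)))) atTop (𝓝 0) := by
  have h := ((tendsto_edgeEnergy_edges_triangleSeq p i).sqrt).const_mul 2
  rw [Real.sqrt_zero, mul_zero] at h
  exact squeeze_zero (fun _ => diam_nonneg) (fun _ => diam_convexHull_le_sqrt_edgeEnergy _) h

end Contraction

def homogMatrix (p : Fin 3 → EuclideanSpace ℝ (Fin 2)) : Matrix (Fin 3) (Fin 3) ℝ :=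
  Matrix.of fun k j => ![1, p j 0, p j 1] k

def baseTriangle : Fin 3 → EuclideanSpace ℝ (Fin 2) := ![euclPt 0 0, euclPt 1 0, euclPt 1 1]

lemma Vmat_eq_homogMatrix : Vmat = homogMatrix baseTriangle := by
  ext k j; fin_cases k <;> fin_cases j <;> rfl

lemma homogMatrix_subdivide (a : Fin 2) (p : Fin 3 → EuclideanSpace ℝ (Fin 2)) :
    homogMatrix (subdivide a p) = homogMatrix p * Gee23 a := by
  ext k j
  fin_cases a <;> fin_cases k <;> fin_cases j <;>
    simp [homogMatrix, subdivide, Gee23, Matrix.mul_apply, Fin.sum_univ_three,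
      midpoint_eq_smul_add] <;> ring

lemma projE_homogMatrix_col (p : Fin 3 → EuclideanSpace ℝ (Fin 2)) (j : Fin 3) :
    projE (fun k => homogMatrix p k j) = p j := by
  ext m; fin_cases m <;> simp [projE, euclPt, homogMatrix]

lemma Vmat_mul_prodSeq_Gee23 (i : ℕ → Fin 2) (n : ℕ) :
    Vmat * prodSeq Gee23 i n = homogMatrix (triangleSeq baseTriangle i n) := by
  induction n with
  | zero => simp [prodSeq, triangleSeq, Vmat_eq_homogMatrix]
  | succ n ih => rw [prodSeq, ← Matrix.mul_assoc, ih, triangleSeq, homogMatrix_subdivide]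

lemma subTriE_Gee23 (i : ℕ → Fin 2) (n : ℕ) :
    subTriE Gee23 i n = convexHull ℝ (range (triangleSeq baseTriangle i n)) := by
  simp only [subTriE, Vmat_mul_prodSeq_Gee23, projE_homogMatrix_col]

/-- For every 0-1 sequence, the diameters of the nested barycentric triangles of
(e,e,23) tend to zero; in particular the intersection is a single point. -/
theorem stmt5 (i : ℕ → Fin 2) :
    Tendsto (fun n => Metric.diam (subTriE Gee23 i n)) atTop (nhds 0) ∧
    ∃ pt : EuclideanSpace ℝ (Fin 2), (⋂ n : ℕ, subTriE Gee23 i (n + 1)) = {pt} := by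
  simp only [subTriE_Gee23]
  have hdiam := tendsto_diam_convexHull_triangleSeq baseTriangle i
  refine ⟨hdiam, exists_iInter_eq_singleton_of_tendsto_diam ?_ (fun n => ?_) (fun n => ?_)
    (hdiam.comp (tendsto_add_atTop_nat 1))⟩
  · exact fun m n hmn => antitone_convexHull_triangleSeq baseTriangle i (Nat.succ_le_succ hmn)
  · exact (finite_range _).isCompact_convexHull ℝ
  · exact (range_nonempty _).convexHull
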